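/- Let p satisfy the Aronson upper bound p(t,x,y) ≤ M t^{−1} exp(−|x−y|²/(Mt)) in dimension d = 2, and r₁(x,y) = ∫₀^∞ e^{−t} p(t,x,y) dt. Then there exists C > 0 such that r₁(x,y) ≤ C (max(log(1/|x−y|), 1)) for all x ≠ y. -/

import Mathlib

/-!
After the substitution `u = |x - y|² / M`, the Gaussian bound dominates `e^{-t} p(t,x,y)` by
`M e^{-t} t⁻¹ e^{-u/t}`. Split `(0, ∞)` at `a = min u 1` and `1`: on `(0, a]` the bound
`e^{-u/t} ≤ t/u` makes the integrand at most `1/u`, on `(a, 1]` it is at most `1/t`, and on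
`(1, ∞)` at most `e^{-t}`. The three pieces contribute `≤ 1`, `log (1/a)` and `≤ 1`, and
`log (1/u) = log M + 2 log (1/|x - y|)`.
-/

open MeasureTheory Set Real

noncomputable def resolventIntegrand (u t : ℝ) : ℝ := exp (-t) * (t⁻¹ * exp (-(u / t)))

lemma inv_mul_exp_neg_div_le {u t : ℝ} (hu : 0 < u) (ht : 0 < t) :
    t⁻¹ * exp (-(u / t)) ≤ u⁻¹ := by
  have hexp : exp (-(u / t)) ≤ t / u := by
    rw [exp_neg, ← inv_div u t]
    exact inv_anti₀ (by positivity)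
      ((le_add_of_nonneg_right zero_le_one).trans (add_one_le_exp _))
  calc t⁻¹ * exp (-(u / t)) ≤ t⁻¹ * (t / u) := by gcongr
    _ = u⁻¹ := by field_simp

lemma inv_mul_exp_neg_div_le_inv {u t : ℝ} (hu : 0 ≤ u) (ht : 0 < t) :
    t⁻¹ * exp (-(u / t)) ≤ t⁻¹ :=
  mul_le_of_le_one_right (by positivity) (exp_le_one_iff.2 (by simp; positivity))

namespace resolventIntegrand

lemma nonneg {u t : ℝ} (ht : 0 ≤ t) : 0 ≤ resolventIntegrand u t := by
  unfold resolventIntegrand; positivity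

lemma le_inv_mul_exp_neg {u t : ℝ} (hu : 0 < u) (ht : 0 < t) :
    resolventIntegrand u t ≤ u⁻¹ * exp (-t) := by
  rw [resolventIntegrand, mul_comm (u⁻¹)]
  exact mul_le_mul_of_nonneg_left (inv_mul_exp_neg_div_le hu ht) (exp_pos _).le

lemma le_inv_param {u t : ℝ} (hu : 0 < u) (ht : 0 < t) : resolventIntegrand u t ≤ u⁻¹ :=
  (le_inv_mul_exp_neg hu ht).trans
    (mul_le_of_le_one_right (by positivity) (exp_le_one_iff.2 (by linarith)))

lemma le_inv_time {u t : ℝ} (hu : 0 ≤ u) (ht : 0 < t) : resolventIntegrand u t ≤ t⁻¹ :=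
  (mul_le_of_le_one_left (by positivity) (exp_le_one_iff.2 (by linarith))).trans
    (inv_mul_exp_neg_div_le_inv hu ht)

lemma le_exp_neg {u t : ℝ} (hu : 0 ≤ u) (ht : 1 ≤ t) : resolventIntegrand u t ≤ exp (-t) :=
  mul_le_of_le_one_right (exp_pos _).le
    ((inv_mul_exp_neg_div_le_inv hu (by linarith)).trans (inv_le_one_of_one_le₀ ht))

lemma integrableOn_Ioi {u : ℝ} (hu : 0 < u) : IntegrableOn (resolventIntegrand u) (Ioi 0) := by
  refine Integrable.mono' ((exp_neg_integrableOn_Ioi 0 one_pos).const_mul u⁻¹) ?_ ?_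
  · unfold resolventIntegrand; fun_prop
  · refine (ae_restrict_iff' measurableSet_Ioi).2 (.of_forall fun t (ht : 0 < t) => ?_)
    rw [norm_of_nonneg (nonneg ht.le), neg_one_mul]
    exact le_inv_mul_exp_neg hu ht

lemma integral_Ioi_le {u : ℝ} (hu : 0 < u) :
    ∫ t in Ioi 0, resolventIntegrand u t ≤ 2 + max (-log u) 0 := by
  set a := min u 1 with ha_def
  have ha : 0 < a := lt_min hu one_pos
  have ha1 : a ≤ 1 := min_le_right _ _
  have hint := integrableOn_Ioi hu
  have hii {b c : ℝ} (hb : 0 ≤ b) (hbc : b ≤ c) :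
      IntervalIntegrable (resolventIntegrand u) volume b c :=
    (intervalIntegrable_iff_integrableOn_Ioc_of_le hbc).2 <|
      hint.mono_set (Ioc_subset_Ioi_self.trans (Ioi_subset_Ioi hb))
  have h_small : ∫ t in 0..a, resolventIntegrand u t ≤ 1 :=
    calc ∫ t in 0..a, resolventIntegrand u t ≤ ∫ _ in 0..a, u⁻¹ :=
          intervalIntegral.integral_mono_on_of_le_Ioo ha.le (hii le_rfl ha.le)
            intervalIntegrable_const fun t ht => le_inv_param hu ht.1
      _ = a / u := by simp [div_eq_mul_inv]
      _ ≤ 1 := div_le_one_of_le₀ (min_le_left _ _) hu.le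
  have h_inv : IntervalIntegrable (fun t : ℝ => t⁻¹) volume a 1 :=
    intervalIntegrable_inv_iff.2 (.inr fun h0 => ha.not_ge (uIcc_of_le ha1 ▸ h0).1)
  have h_mid : ∫ t in a..1, resolventIntegrand u t ≤ max (-log u) 0 :=
    calc ∫ t in a..1, resolventIntegrand u t ≤ ∫ t in a..1, t⁻¹ :=
          intervalIntegral.integral_mono_on_of_le_Ioo ha1 (hii ha.le ha1) h_inv
            fun t ht => le_inv_time hu.le (ha.trans ht.1)
      _ = -log a := by
          rw [integral_inv_of_pos ha one_pos, log_div one_ne_zero ha.ne', log_one, zero_sub]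
      _ = max (-log u) 0 := by
          rcases le_total u 1 with h | h
          · rw [ha_def, min_eq_left h, max_eq_left (neg_nonneg.2 (log_nonpos hu.le h))]
          · rw [ha_def, min_eq_right h, log_one, neg_zero,
              max_eq_right (neg_nonpos.2 (log_nonneg h))]
  have h_large : ∫ t in Ioi 1, resolventIntegrand u t ≤ 1 :=
    calc ∫ t in Ioi 1, resolventIntegrand u t ≤ ∫ t in Ioi 1, exp (-t) :=
          setIntegral_mono_on (hint.mono_set (Ioi_subset_Ioi zero_le_one))
            (by simpa using exp_neg_integrableOn_Ioi 1 one_pos) measurableSet_Ioi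
            fun t ht => le_exp_neg hu.le (le_of_lt ht)
      _ ≤ 1 := by rw [integral_exp_neg_Ioi]; exact exp_le_one_iff.2 (by norm_num)
  rw [← intervalIntegral.integral_interval_add_Ioi hint
      (hint.mono_set (Ioi_subset_Ioi zero_le_one)),
    ← intervalIntegral.integral_add_adjacent_intervals (hii le_rfl ha.le) (hii ha.le ha1)]
  linarith

end resolventIntegrand

lemma neg_log_sq_div_le {M r : ℝ} (hM : 1 ≤ M) (hr : 0 < r) :
    -log (r ^ 2 / M) ≤ M + 2 * log (1 / r) := by
  have hM0 : 0 < M := zero_lt_one.trans_le hM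
  rw [log_div (by positivity) hM0.ne', log_pow, one_div, log_inv]
  push_cast
  linarith [log_le_sub_one_of_pos hM0]

/-- Let `p` satisfy the Aronson upper bound `p(t,x,y) ≤ M t⁻¹ exp(−|x−y|²/(M t))` in dimension
`d = 2`, and `r₁(x,y) = ∫₀^∞ e^{−t} p(t,x,y) dt`.  Then there exists `C > 0` such that
`r₁(x,y) ≤ C max (log (1/|x−y|)) 1` for all `x ≠ y`. -/
theorem stmt_12 (M : ℝ) (hM : 1 ≤ M)
    (p : ℝ → EuclideanSpace ℝ (Fin 2) → EuclideanSpace ℝ (Fin 2) → ℝ)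
    (hpos : ∀ t x y, 0 < t → 0 ≤ p t x y)
    (hbound : ∀ t x y, 0 < t →
      p t x y ≤ M * t⁻¹ * Real.exp (-‖x - y‖ ^ 2 / (M * t))) :
    ∃ C : ℝ, 0 < C ∧ ∀ x y : EuclideanSpace ℝ (Fin 2), x ≠ y →
      (∫ t in Set.Ioi (0 : ℝ), Real.exp (-t) * p t x y) ≤
        C * max (Real.log (1 / ‖x - y‖)) 1 := by
  refine ⟨M * (M + 4), by positivity, fun x y hxy => ?_⟩
  set r := ‖x - y‖
  have hr : 0 < r := norm_pos_iff.2 (sub_ne_zero.2 hxy)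
  have hu : 0 < r ^ 2 / M := by positivity
  have h_dom :
      ∀ t ∈ Ioi (0 : ℝ), exp (-t) * p t x y ≤ M * resolventIntegrand (r ^ 2 / M) t :=
    fun t ht => calc
      exp (-t) * p t x y ≤ exp (-t) * (M * t⁻¹ * exp (-r ^ 2 / (M * t))) := by
        gcongr; exact hbound t x y ht
      _ = M * resolventIntegrand (r ^ 2 / M) t := by
        rw [resolventIntegrand, div_div, neg_div]; ring
  have hL : 1 ≤ max (log (1 / r)) 1 := le_max_right _ _
  have h_log : max (-log (r ^ 2 / M)) 0 ≤ M + 2 * max (log (1 / r)) 1 :=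
    max_le ((neg_log_sq_div_le hM hr).trans (by gcongr; exact le_max_left _ _)) (by linarith)
  calc ∫ t in Ioi 0, exp (-t) * p t x y
        ≤ ∫ t in Ioi 0, M * resolventIntegrand (r ^ 2 / M) t :=
        integral_mono_of_nonneg
          ((ae_restrict_iff' measurableSet_Ioi).2 (.of_forall fun t ht =>
            mul_nonneg (exp_pos _).le (hpos t x y ht)))
          ((resolventIntegrand.integrableOn_Ioi hu).const_mul M)
          ((ae_restrict_iff' measurableSet_Ioi).2 (.of_forall h_dom))
    _ ≤ M * (2 + (M + 2 * max (log (1 / r)) 1)) := by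
        rw [integral_const_mul]
        gcongr
        exact (resolventIntegrand.integral_Ioi_le hu).trans (add_le_add_right h_log 2)
    _ ≤ M * (M + 4) * max (log (1 / r)) 1 := by
        nlinarith [mul_nonneg (by positivity : 0 ≤ M * (M + 2)) (sub_nonneg.2 hL)]
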